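/- arXiv:1605.06181 — 7 statements merged into one kernel-verified Lean document; each statement's English description precedes it below -/
import Mathlib

section
/- Fix p ≥ 0 and c > 0. The function E(ξ) = (1/c) · log(1 + 1/ξ) · (p · e^c · e^{-ξ} + 1) is strictly antitone (strictly decreasing) on the interval (0, ∞). Consequently, for ξ₁, ξ₂ > 0, if E(ξ₁) < E(ξ₂) then ξ₁ > ξ₂; i.e., the variational parameter ξ^min decreases monotonically as the expected finding-degree E[|π(f)|] increases. (Proposition 1) -/
open Real Set

lemma StrictAntiOn.mul_antitoneOn {α M₀ : Type*} [Preorder α] [MulZeroClass M₀]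
    [PartialOrder M₀] [PosMulMono M₀] [MulPosStrictMono M₀] {f g : α → M₀} {s : Set α}
    (hf : StrictAntiOn f s) (hg : AntitoneOn g s)
    (hf₀ : ∀ x ∈ s, 0 ≤ f x) (hg₀ : ∀ x ∈ s, 0 < g x) :
    StrictAntiOn (fun x ↦ f x * g x) s := fun _ ha _ hb hab ↦
  mul_lt_mul (hf ha hb hab) (hg ha hb hab.le) (hg₀ _ hb) (hf₀ _ ha)

lemma Real.log_one_add_inv_pos {x : ℝ} (hx : 0 < x) : 0 < log (1 + 1 / x) :=
  log_pos (lt_add_of_pos_right 1 (one_div_pos.mpr hx))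

lemma Real.strictAntiOn_log_one_add_inv : StrictAntiOn (fun x : ℝ ↦ log (1 + 1 / x)) (Ioi 0) :=
  fun x hx y hy hxy ↦ log_lt_log (by have : 0 < y := hy; positivity)
    (add_lt_add_right (one_div_lt_one_div_of_lt hx hxy) 1)

lemma Real.antitone_mul_exp_neg_add_one {a : ℝ} (ha : 0 ≤ a) :
    Antitone fun x : ℝ ↦ a * exp (-x) + 1 := fun _ _ hxy ↦
  add_le_add_left (mul_le_mul_of_nonneg_left (exp_le_exp.mpr (neg_le_neg hxy)) ha) 1

/-- Proposition 1: for fixed `p ≥ 0` and `c > 0`, the expected finding-degree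
`E(ξ) = (1/c) · log(1 + 1/ξ) · (p · e^c · e^{-ξ} + 1)` is strictly decreasing on `(0, ∞)`;
consequently `E ξ₁ < E ξ₂` forces `ξ₁ > ξ₂` for positive `ξ₁, ξ₂`. -/
theorem stmt_0 (p c : ℝ) (hp : 0 ≤ p) (hc : 0 < c) :
    StrictAntiOn
      (fun ξ : ℝ => (1 / c) * Real.log (1 + 1 / ξ) * (p * Real.exp c * Real.exp (-ξ) + 1))
      (Set.Ioi 0) ∧
    ∀ ξ₁ ξ₂ : ℝ, 0 < ξ₁ → 0 < ξ₂ →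
      (1 / c) * Real.log (1 + 1 / ξ₁) * (p * Real.exp c * Real.exp (-ξ₁) + 1) <
        (1 / c) * Real.log (1 + 1 / ξ₂) * (p * Real.exp c * Real.exp (-ξ₂) + 1) →
      ξ₁ > ξ₂ := by
  have hlog : StrictAntiOn (fun ξ : ℝ ↦ 1 / c * log (1 + 1 / ξ)) (Ioi 0) :=
    (strictMono_mul_left_of_pos (one_div_pos.mpr hc)).comp_strictAntiOn
      strictAntiOn_log_one_add_inv
  have hE : StrictAntiOn
      (fun ξ : ℝ ↦ 1 / c * log (1 + 1 / ξ) * (p * exp c * exp (-ξ) + 1)) (Ioi 0) :=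
    hlog.mul_antitoneOn ((antitone_mul_exp_neg_add_one (by positivity)).antitoneOn _)
      (fun ξ hξ ↦ by have := log_one_add_inv_pos (mem_Ioi.mp hξ); positivity)
      (fun _ _ ↦ by positivity)
  exact ⟨hE, fun ξ₁ ξ₂ h₁ h₂ ↦ (hE.lt_iff_gt h₁ h₂).mp⟩
end

section
/- For every x > 0 and every ξ > 0, log(1 − e^{−x}) ≤ ξ·x + ξ·log ξ − (ξ+1)·log(ξ+1); equivalently, 1 − e^{−x} ≤ exp(ξ·x − f*(ξ)). -/
/-!
Put `t = e^{-x} ∈ (0, 1)`, so that `ξ x = -ξ log t`. The bound becomes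
`ξ log t + log (1 - t) ≤ ξ log ξ - (ξ + 1) log (ξ + 1)`, the two-point Gibbs inequality for the
weights `(ξ, 1)` and the sub-probability vector `(t, 1 - t)`; it follows from `log y ≤ y - 1`
applied to `y = t (ξ + 1) / ξ` and `y = (1 - t) (ξ + 1)`.
-/

open Real

lemma mul_log_le_mul_log_div_add {a u s : ℝ} (ha : 0 < a) (hu : 0 < u) (hs : 0 < s) :
    a * log u + a * log s - a * log a ≤ u * s - a := by
  have h := log_le_sub_one_of_pos (show 0 < u * s / a by positivity)
  rw [log_div (by positivity) ha.ne', log_mul hu.ne' hs.ne'] at h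
  have h' := mul_le_mul_of_nonneg_left h ha.le
  rw [mul_sub, mul_add, mul_sub, mul_div_cancel₀ _ ha.ne', mul_one] at h'
  exact h'

/-- Gibbs' inequality for two positive weights `a, b` and a sub-probability vector `(u, v)`. -/
lemma mul_log_add_mul_log_le {a b u v : ℝ} (ha : 0 < a) (hb : 0 < b) (hu : 0 < u) (hv : 0 < v)
    (huv : u + v ≤ 1) :
    a * log u + b * log v ≤ a * log a + b * log b - (a + b) * log (a + b) := by
  have hab : 0 < a + b := by positivity
  have hA := mul_log_le_mul_log_div_add ha hu hab
  have hB := mul_log_le_mul_log_div_add hb hv hab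
  nlinarith

lemma log_one_sub_exp_neg_le {x ξ : ℝ} (hx : 0 < x) (hξ : 0 < ξ) :
    log (1 - exp (-x)) ≤ ξ * x + ξ * log ξ - (ξ + 1) * log (ξ + 1) := by
  have hlt : exp (-x) < 1 := exp_lt_one_iff.mpr (by linarith)
  have h := mul_log_add_mul_log_le hξ one_pos (exp_pos (-x)) (sub_pos.mpr hlt) (by linarith)
  rw [log_exp, log_one, mul_zero, add_zero, one_mul] at h
  linarith

/-- The Jaakkola–Jordan variational upper bound: for `x > 0` and `ξ > 0`,
`log(1 − e^{−x}) ≤ ξ·x + ξ·log ξ − (ξ+1)·log(ξ+1)`; equivalently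
`1 − e^{−x} ≤ exp(ξ·x − f*(ξ))` with `f*(ξ) = −ξ·log ξ + (ξ+1)·log(ξ+1)`. -/
theorem stmt_3 :
    ∀ x : ℝ, 0 < x → ∀ ξ : ℝ, 0 < ξ →
      Real.log (1 - Real.exp (-x)) ≤
          ξ * x + ξ * Real.log ξ - (ξ + 1) * Real.log (ξ + 1) ∧
      1 - Real.exp (-x) ≤
          Real.exp (ξ * x - (-(ξ * Real.log ξ) + (ξ + 1) * Real.log (ξ + 1))) := by
  intro x hx ξ hξ
  have hlog := log_one_sub_exp_neg_le hx hξ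
  refine ⟨hlog, ?_⟩
  have hpos : 0 < 1 - exp (-x) := sub_pos.mpr (exp_lt_one_iff.mpr (by linarith))
  calc 1 - exp (-x) = exp (log (1 - exp (-x))) := (exp_log hpos).symm
    _ ≤ _ := exp_le_exp.mpr (by linarith)
end

section
/- Let n ≥ 1, let θ : Fin n → ℝ with θᵢ ≥ 0 for all i, and let q : Fin n → ℝ with 0 ≤ qᵢ ≤ 1 for all i. Then for every ξ > 0: 1 − ∏_{i} (qᵢ·e^{−θᵢ} + (1 − qᵢ)) ≤ exp(ξ·log ξ − (ξ+1)·log(ξ+1)) · ∏_{i} (qᵢ·e^{ξ·θᵢ} + (1 − qᵢ)). -/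
/-!
Write `P(f⁻) = 𝔼[exp (-∑ᵢ θᵢ dᵢ)]` for independent Bernoulli(`qᵢ`) variables `dᵢ`, expanded as a
sum over the set `s` of present diseases. Then `P(f⁺) = 𝔼[1 - e^{-T}]` with `T = ∑_{i ∈ s} θᵢ`,
and pointwise `1 - e^{-T} ≤ e^{-f*(ξ)} e^{ξT}`; taking expectations and refactoring
`𝔼[e^{ξT}]` as a product over independent diseases gives the bound. The pointwise inequality
says `(1 - u) u^ξ ≤ ξ^ξ / (ξ+1)^{ξ+1}` for `u = e^{-T}`, which is `log y ≤ y - 1` applied at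
`y = (ξ+1)(1-u)` and at `y = (ξ+1)u/ξ`.
-/

open Finset Real

section BernoulliExpansion

variable {ι : Type*} [Fintype ι] [DecidableEq ι]

/-- The probability that exactly the diseases in `s` are present. -/
noncomputable def bernoulliWeight (q : ι → ℝ) (s : Finset ι) : ℝ :=
  (∏ i ∈ s, q i) * ∏ i ∈ univ \ s, (1 - q i)

lemma bernoulliWeight_nonneg {q : ι → ℝ} (hq0 : ∀ i, 0 ≤ q i) (hq1 : ∀ i, q i ≤ 1)
    (s : Finset ι) : 0 ≤ bernoulliWeight q s :=
  mul_nonneg (prod_nonneg fun i _ => hq0 i) (prod_nonneg fun i _ => sub_nonneg.2 (hq1 i))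

lemma prod_mul_exp_add_one_sub (q a : ι → ℝ) :
    ∏ i, (q i * exp (a i) + (1 - q i)) =
      ∑ s ∈ univ.powerset, bernoulliWeight q s * exp (∑ i ∈ s, a i) := by
  rw [prod_add]
  refine sum_congr rfl fun s _ => ?_
  rw [prod_mul_distrib, exp_sum, bernoulliWeight]
  ring

lemma sum_bernoulliWeight (q : ι → ℝ) : ∑ s ∈ univ.powerset, bernoulliWeight q s = 1 := by
  simpa using (prod_mul_exp_add_one_sub q 0).symm

end BernoulliExpansion

lemma one_sub_exp_neg_le {ξ : ℝ} (hξ : 0 < ξ) (t : ℝ) :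
    1 - exp (-t) ≤ exp (ξ * log ξ - (ξ + 1) * log (ξ + 1)) * exp (ξ * t) := by
  set u := exp (-t)
  rcases le_or_gt (1 - u) 0 with hu1 | hu1
  · exact hu1.trans (by positivity)
  have hu : 0 < u := exp_pos _
  have hξ1 : 0 < ξ + 1 := by linarith
  have h₁ := log_le_sub_one_of_pos (mul_pos hξ1 hu1)
  have h₂ := log_le_sub_one_of_pos (div_pos (mul_pos hξ1 hu) hξ)
  rw [log_mul hξ1.ne' hu1.ne'] at h₁
  rw [log_div (mul_pos hξ1 hu).ne' hξ.ne', log_mul hξ1.ne' hu.ne', log_exp,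
    div_sub_one hξ.ne', le_div_iff₀ hξ] at h₂
  have hlog : log (1 - u) ≤ ξ * log ξ - (ξ + 1) * log (ξ + 1) + ξ * t := by
    linarith
  calc 1 - u = exp (log (1 - u)) := (exp_log hu1).symm
    _ ≤ _ := exp_le_exp.2 hlog
    _ = _ := exp_add _ _

theorem stmt_7_general (n : ℕ) (θ q : Fin n → ℝ)
    (hq0 : ∀ i, 0 ≤ q i) (hq1 : ∀ i, q i ≤ 1) :
    ∀ ξ : ℝ, 0 < ξ →
      1 - ∏ i, (q i * Real.exp (-θ i) + (1 - q i)) ≤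
        Real.exp (ξ * Real.log ξ - (ξ + 1) * Real.log (ξ + 1)) *
          ∏ i, (q i * Real.exp (ξ * θ i) + (1 - q i)) := by
  intro ξ hξ
  set C := exp (ξ * log ξ - (ξ + 1) * log (ξ + 1))
  rw [prod_mul_exp_add_one_sub q (fun i => -θ i), prod_mul_exp_add_one_sub q (fun i => ξ * θ i)]
  calc 1 - ∑ s ∈ univ.powerset, bernoulliWeight q s * exp (∑ i ∈ s, -θ i)
      = ∑ s ∈ univ.powerset, bernoulliWeight q s * (1 - exp (-∑ i ∈ s, θ i)) := by
        simp only [mul_one_sub, sum_sub_distrib, sum_bernoulliWeight, sum_neg_distrib]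
    _ ≤ ∑ s ∈ univ.powerset, bernoulliWeight q s * (C * exp (ξ * ∑ i ∈ s, θ i)) :=
        sum_le_sum fun s _ => mul_le_mul_of_nonneg_left (one_sub_exp_neg_le hξ _)
          (bernoulliWeight_nonneg hq0 hq1 s)
    _ = C * ∑ s ∈ univ.powerset, bernoulliWeight q s * exp (∑ i ∈ s, ξ * θ i) := by
        simp only [mul_sum, mul_left_comm]

open Finset in
/-- Equation 5: the marginal probability of a positive finding,
`P(f⁺) = 1 − ∏ᵢ (qᵢ·e^{−θᵢ} + (1 − qᵢ))`, is bounded above by the variational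
upper bound `P(f⁺ | ξ) = e^{−f*(ξ)} · ∏ᵢ (qᵢ·e^{ξθᵢ} + (1 − qᵢ))`. -/
theorem stmt_7 (n : ℕ) (hn : 1 ≤ n) (θ q : Fin n → ℝ)
    (hθ : ∀ i, 0 ≤ θ i) (hq0 : ∀ i, 0 ≤ q i) (hq1 : ∀ i, q i ≤ 1) :
    ∀ ξ : ℝ, 0 < ξ →
      1 - ∏ i, (q i * Real.exp (-θ i) + (1 - q i)) ≤
        Real.exp (ξ * Real.log ξ - (ξ + 1) * Real.log (ξ + 1)) *
          ∏ i, (q i * Real.exp (ξ * θ i) + (1 - q i)) :=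
  stmt_7_general n θ q hq0 hq1
end

section
/- Let n, k ≥ 1, let θ : Fin k → Fin n → ℝ with θ_{ji} ≥ 0, let q : Fin n → ℝ with 0 ≤ qᵢ ≤ 1, and let ξ : Fin k → ℝ with ξⱼ > 0. Then Σ_{d ∈ {0,1}^n} [∏_{i} qᵢ^{dᵢ}·(1 − qᵢ)^{1 − dᵢ}] · ∏_{j} (1 − exp(−Σ_{i} θ_{ji}·dᵢ)) ≤ exp(−Σ_{j} f*(ξⱼ)) · ∏_{i} (qᵢ·exp(Σ_{j} ξⱼ·θ_{ji}) + (1 − qᵢ)), where f*(ξ) = −ξ·log ξ + (ξ+1)·log(ξ+1). -/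
/-!
Each noisy-or factor `1 - exp (-x)` is bounded by the exponential of a linear function of `x`:
with `u = exp (-x)`, maximising `u ^ ξ * (1 - u)` over `u` gives
`1 - exp (-x) ≤ exp (ξ * x - f* ξ)`. After this bound the integrand factorises over the diseases,
and the sum over all configurations becomes a product of per-disease expectations.
-/

open Finset Real

/-- The concave conjugate `f*` of `x ↦ log (1 - exp (-x))`. -/
noncomputable def noisyOrConj (t : ℝ) : ℝ := -(t * log t) + (t + 1) * log (t + 1)

theorem one_sub_exp_neg_le_exp_sub_noisyOrConj (x : ℝ) {t : ℝ} (ht : 0 < t) :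
    1 - exp (-x) ≤ exp (t * x - noisyOrConj t) := by
  rcases le_or_gt (1 - exp (-x)) 0 with hle | hpos
  · exact hle.trans (exp_pos _).le
  rw [← log_le_iff_le_exp hpos, noisyOrConj]
  set u := exp (-x)
  have hu : 0 < u := exp_pos _
  have ht1 : 0 < t + 1 := by linarith
  -- `log y ≤ y - 1` at `y = u (t + 1) / t` and `y = (1 - u) (t + 1)`; the right-hand sides cancel
  have h₁ := log_le_sub_one_of_pos (show 0 < u * (t + 1) / t by positivity)
  have h₂ := log_le_sub_one_of_pos (mul_pos hpos ht1)
  rw [log_div (by positivity) ht.ne', log_mul hu.ne' ht1.ne', log_exp] at h₁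
  rw [log_mul hpos.ne' ht1.ne'] at h₂
  have h₁' : t * (-x + log (t + 1) - log t) ≤ u * (t + 1) - t :=
    calc _ ≤ t * (u * (t + 1) / t - 1) := mul_le_mul_of_nonneg_left h₁ ht.le
      _ = _ := by field_simp
  linarith

theorem prod_one_sub_exp_neg_le {ι : Type*} (s : Finset ι) {x t : ι → ℝ}
    (hx : ∀ j ∈ s, 0 ≤ x j) (ht : ∀ j ∈ s, 0 < t j) :
    ∏ j ∈ s, (1 - exp (-x j)) ≤
      exp (-∑ j ∈ s, noisyOrConj (t j)) * exp (∑ j ∈ s, t j * x j) := by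
  rw [← exp_add, neg_add_eq_sub, ← sum_sub_distrib, exp_sum]
  refine prod_le_prod (fun j hj => ?_) fun j hj =>
    one_sub_exp_neg_le_exp_sub_noisyOrConj _ (ht j hj)
  have := exp_le_one_iff.mpr (neg_nonpos.mpr (hx j hj))
  linarith

theorem Fintype.sum_pi_bool_prod_ite {ι R : Type*} [Fintype ι] [DecidableEq ι]
    [CommSemiring R] (a b : ι → R) :
    ∑ d : ι → Bool, ∏ i, (if d i then a i else b i) = ∏ i, (a i + b i) := by
  calc _ = ∏ i, ∑ c : Bool, if c then a i else b i := (Fintype.prod_sum _).symm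
    _ = _ := by simp only [Fintype.sum_bool, if_true, Bool.false_eq_true, if_false]

theorem prod_ite_mul_exp_sum {ι : Type*} (s : Finset ι) (d : ι → Bool) (a b c : ι → ℝ) :
    (∏ i ∈ s, if d i then a i else b i) * exp (∑ i ∈ s, c i * if d i then 1 else 0) =
      ∏ i ∈ s, if d i then a i * exp (c i) else b i := by
  rw [exp_sum, ← prod_mul_distrib]
  refine prod_congr rfl fun i _ => ?_
  cases d i <;> simp

open Finset in
theorem stmt_8_general (n k : ℕ)
    (θ : Fin k → Fin n → ℝ) (hθ : ∀ j i, 0 ≤ θ j i)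
    (q : Fin n → ℝ) (hq0 : ∀ i, 0 ≤ q i) (hq1 : ∀ i, q i ≤ 1)
    (ξ : Fin k → ℝ) (hξ : ∀ j, 0 < ξ j) :
    ∑ d : Fin n → Bool,
        (∏ i, (if d i then q i else 1 - q i)) *
          ∏ j, (1 - Real.exp (-∑ i, θ j i * (if d i then 1 else 0))) ≤
      Real.exp (-∑ j, (-(ξ j * Real.log (ξ j)) + (ξ j + 1) * Real.log (ξ j + 1))) *
        ∏ i, (q i * Real.exp (∑ j, ξ j * θ j i) + (1 - q i)) := by
  have hprior : ∀ (d : Fin n → Bool) i, 0 ≤ if d i then q i else 1 - q i := fun d i => by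
    split_ifs
    exacts [hq0 i, sub_nonneg.mpr (hq1 i)]
  have hload : ∀ (d : Fin n → Bool) j, 0 ≤ ∑ i, θ j i * if d i then 1 else 0 := fun d j =>
    sum_nonneg fun i _ => mul_nonneg (hθ j i) (by split_ifs <;> norm_num)
  have hswap : ∀ d : Fin n → Bool, ∑ j, ξ j * ∑ i, θ j i * (if d i then 1 else 0) =
      ∑ i, (∑ j, ξ j * θ j i) * if d i then 1 else 0 := fun d => by
    simp only [mul_sum, sum_mul, mul_assoc]
    exact sum_comm
  calc _ ≤ ∑ d : Fin n → Bool, (∏ i, if d i then q i else 1 - q i) *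
        (exp (-∑ j, noisyOrConj (ξ j)) *
          exp (∑ i, (∑ j, ξ j * θ j i) * if d i then 1 else 0)) := by
        refine sum_le_sum fun d _ =>
          mul_le_mul_of_nonneg_left ?_ (prod_nonneg fun i _ => hprior d i)
        rw [← hswap]
        exact prod_one_sub_exp_neg_le _ (fun j _ => hload d j) fun j _ => hξ j
    _ = exp (-∑ j, noisyOrConj (ξ j)) *
        ∑ d : Fin n → Bool, ∏ i, if d i then q i * exp (∑ j, ξ j * θ j i) else 1 - q i := by
        simp only [mul_sum, mul_left_comm _ (exp _), prod_ite_mul_exp_sum]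
    _ = _ := by rw [Fintype.sum_pi_bool_prod_ite]; rfl

open Finset in
/-- Equation 7: the exact marginal probability of `k` positive findings in a noisy-or
network is bounded above by the joint variational upper bound `P(F⁺ | Ξ)`, where
`f*(ξ) = −ξ·log ξ + (ξ+1)·log(ξ+1)`. -/
theorem stmt_8 (n k : ℕ) (hn : 1 ≤ n) (hk : 1 ≤ k)
    (θ : Fin k → Fin n → ℝ) (hθ : ∀ j i, 0 ≤ θ j i)
    (q : Fin n → ℝ) (hq0 : ∀ i, 0 ≤ q i) (hq1 : ∀ i, q i ≤ 1)
    (ξ : Fin k → ℝ) (hξ : ∀ j, 0 < ξ j) :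
    ∑ d : Fin n → Bool,
        (∏ i, (if d i then q i else 1 - q i)) *
          ∏ j, (1 - Real.exp (-∑ i, θ j i * (if d i then 1 else 0))) ≤
      Real.exp (-∑ j, (-(ξ j * Real.log (ξ j)) + (ξ j + 1) * Real.log (ξ j + 1))) *
        ∏ i, (q i * Real.exp (∑ j, ξ j * θ j i) + (1 - q i)) :=
  stmt_8_general n k θ hθ q hq0 hq1 ξ hξ
end

section
/- Let n ≥ 1, let A and B be disjoint finite index sets of findings, let a : (A ∪ B) → Fin n → ℝ (with each a_{ji} ∈ [0,1]) and q : Fin n → ℝ (with 0 ≤ qᵢ ≤ 1). Then Σ_{d ∈ {0,1}^n} [∏_{i} qᵢ^{dᵢ}·(1 − qᵢ)^{1 − dᵢ}] · [∏_{j ∈ A} (1 − ∏_{i : dᵢ = 1} a_{ji})] · [∏_{j ∈ B} ∏_{i : dᵢ = 1} a_{ji}] = Σ_{F' ⊆ A} (−1)^{|F'|} · ∏_{i} (qᵢ · ∏_{j ∈ B ∪ F'} a_{ji} + (1 − qᵢ)). -/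
/-!
Expanding `∏_{j ∈ A} (1 - P_j(d))` by inclusion–exclusion turns the evidence into an alternating
sum over `F' ⊆ A` of expectations of `∏_{j ∈ B ∪ F'} P_j(d)`, where `P_j(d) = ∏_{i ∈ d} a_{ji}` is
the probability that finding `j` is negative. Since this product factorizes over the diseases and
the diseases are independent, each expectation is a product of one-disease expectations
`q_i ∏_j a_{ji} + (1 - q_i)`.
-/

open Finset

theorem Finset.prod_one_sub_eq_sum_powerset {ι R : Type*} [DecidableEq ι] [CommRing R]
    (s : Finset ι) (f : ι → R) :
    ∏ j ∈ s, (1 - f j) = ∑ t ∈ s.powerset, (-1) ^ #t * ∏ j ∈ t, f j := by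
  simp [prod_sub]

theorem Fintype.sum_prod_ite_mul_prod_filter {σ R : Type*} [Fintype σ] [DecidableEq σ]
    [CommSemiring R] (x y g : σ → R) :
    ∑ d : σ → Bool, (∏ i, if d i then x i else y i) * ∏ i ∈ univ.filter (fun i => d i = true), g i
      = ∏ i, (x i * g i + y i) := by
  have hfactor : ∀ d : σ → Bool,
      (∏ i, if d i then x i else y i) * ∏ i ∈ univ.filter (fun i => d i = true), g i
        = ∏ i, if d i then x i * g i else y i := by
    intro d
    rw [prod_filter, ← prod_mul_distrib]
    refine Finset.prod_congr rfl fun i _ => ?_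
    cases d i <;> simp
  simp_rw [hfactor, ← Fintype.prod_sum fun i (b : Bool) => if b then x i * g i else y i,
    Fintype.sum_bool, if_true, Bool.false_eq_true, if_false]

open Finset in
theorem stmt_9_general {ι : Type*} [DecidableEq ι] (n : ℕ)
    (A B : Finset ι) (hAB : Disjoint A B)
    (a : ι → Fin n → ℝ)
    (q : Fin n → ℝ) :
    ∑ d : Fin n → Bool,
        (∏ i, (if d i then q i else 1 - q i)) *
          (∏ j ∈ A, (1 - ∏ i ∈ Finset.univ.filter (fun i => d i = true), a j i)) *
          (∏ j ∈ B, ∏ i ∈ Finset.univ.filter (fun i => d i = true), a j i) =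
      ∑ F' ∈ A.powerset,
        (-1 : ℝ) ^ F'.card *
          ∏ i, (q i * ∏ j ∈ B ∪ F', a j i + (1 - q i)) := by
  set w : (Fin n → Bool) → ℝ := fun d => ∏ i, if d i then q i else 1 - q i
  set P : (Fin n → Bool) → ι → ℝ := fun d j => ∏ i ∈ univ.filter (fun i => d i = true), a j i
  have hexpand : ∀ d, w d * (∏ j ∈ A, (1 - P d j)) * ∏ j ∈ B, P d j
      = ∑ F' ∈ A.powerset, (-1) ^ #F' * (w d * ∏ j ∈ B ∪ F', P d j) := by
    intro d
    rw [prod_one_sub_eq_sum_powerset, mul_sum, sum_mul]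
    refine sum_congr rfl fun F' hF' => ?_
    rw [prod_union (hAB.symm.mono_right (mem_powerset.mp hF'))]
    ring
  calc ∑ d, w d * (∏ j ∈ A, (1 - P d j)) * ∏ j ∈ B, P d j
      = ∑ F' ∈ A.powerset, (-1) ^ #F' * ∑ d, w d * ∏ j ∈ B ∪ F', P d j := by
        simp_rw [hexpand, mul_sum]
        exact sum_comm
    _ = _ := by
        refine sum_congr rfl fun F' _ => ?_
        simp_rw [w, P, prod_comm (s := B ∪ F')]
        rw [Fintype.sum_prod_ite_mul_prod_filter]

open Finset in
/-- Quickscore-style inclusion–exclusion identity: the exact noisy-or evidence of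
positive findings `A` and negative findings `B` equals an alternating sum over
subsets `F' ⊆ A` of products factorizing over diseases. -/
theorem stmt_9 {ι : Type*} [DecidableEq ι] (n : ℕ) (hn : 1 ≤ n)
    (A B : Finset ι) (hAB : Disjoint A B)
    (a : ι → Fin n → ℝ) (ha0 : ∀ j ∈ A ∪ B, ∀ i, 0 ≤ a j i)
    (ha1 : ∀ j ∈ A ∪ B, ∀ i, a j i ≤ 1)
    (q : Fin n → ℝ) (hq0 : ∀ i, 0 ≤ q i) (hq1 : ∀ i, q i ≤ 1) :
    ∑ d : Fin n → Bool,
        (∏ i, (if d i then q i else 1 - q i)) *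
          (∏ j ∈ A, (1 - ∏ i ∈ Finset.univ.filter (fun i => d i = true), a j i)) *
          (∏ j ∈ B, ∏ i ∈ Finset.univ.filter (fun i => d i = true), a j i) =
      ∑ F' ∈ A.powerset,
        (-1 : ℝ) ^ F'.card *
          ∏ i, (q i * ∏ j ∈ B ∪ F', a j i + (1 - q i)) :=
  stmt_9_general n A B hAB a q
end

section
/- Let n ≥ 1, θ : Fin n → ℝ with θᵢ ≥ 0, and q : Fin n → ℝ with 0 ≤ qᵢ ≤ 1. The function g(ξ) = ξ·log ξ − (ξ+1)·log(ξ+1) + Σ_{i} log(qᵢ·e^{ξ·θᵢ} + (1 − qᵢ)) is convex on (0, ∞). -/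
/-!
Every summand is convex by a second-derivative test: `log (a * exp x + b)` has second derivative
`a * b * exp x / (a * exp x + b) ^ 2 ≥ 0`, which survives the linear change of variable
`x = ξ * θᵢ`, and `x * log x - (x + c) * log (x + c)` has second derivative `x⁻¹ - (x + c)⁻¹ ≥ 0`.
-/

open Set Real

theorem ConvexOn.finset_sum {𝕜 E β ι : Type*} [Semiring 𝕜] [PartialOrder 𝕜] [AddCommMonoid E]
    [AddCommMonoid β] [PartialOrder β] [IsOrderedAddMonoid β] [SMul 𝕜 E] [Module 𝕜 β]
    {s : Set E} (hs : Convex 𝕜 s) {f : ι → E → β} (t : Finset ι)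
    (hf : ∀ i ∈ t, ConvexOn 𝕜 s (f i)) : ConvexOn 𝕜 s (fun x ↦ ∑ i ∈ t, f i x) := by
  classical
  induction t using Finset.induction_on with
  | empty => simpa using convexOn_const 0 hs
  | insert a t ha ih =>
    simp only [Finset.sum_insert ha]
    exact (hf a (t.mem_insert_self a)).add (ih fun i hi ↦ hf i (Finset.mem_insert_of_mem hi))

theorem convexOn_of_hasDerivAt2_nonneg {D : Set ℝ} (hD : Convex ℝ D) (hDo : IsOpen D)
    {f f' f'' : ℝ → ℝ} (hf' : ∀ x ∈ D, HasDerivAt f (f' x) x)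
    (hf'' : ∀ x ∈ D, HasDerivAt f' (f'' x) x) (hf''₀ : ∀ x ∈ D, 0 ≤ f'' x) :
    ConvexOn ℝ D f := by
  refine convexOn_of_hasDerivWithinAt2_nonneg (f' := f') (f'' := f'') hD
    (fun x hx ↦ (hf' x hx).continuousAt.continuousWithinAt) ?_ ?_ ?_ <;>
    rw [hDo.interior_eq]
  exacts [fun x hx ↦ (hf' x hx).hasDerivWithinAt, fun x hx ↦ (hf'' x hx).hasDerivWithinAt, hf''₀]

theorem convexOn_log_mul_exp_add {a b : ℝ} (ha : 0 ≤ a) (hb : 0 ≤ b) (hab : 0 < a + b) :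
    ConvexOn ℝ univ (fun x ↦ log (a * exp x + b)) := by
  have hpos : ∀ x, 0 < a * exp x + b := fun x ↦ by
    rcases ha.eq_or_lt with rfl | ha
    · simpa using hab
    · positivity
  have hden : ∀ x, HasDerivAt (fun x ↦ a * exp x + b) (a * exp x) x := fun x ↦
    ((hasDerivAt_exp x).const_mul a).add_const b
  refine convexOn_of_hasDerivAt2_nonneg convex_univ isOpen_univ
    (f' := fun x ↦ a * exp x / (a * exp x + b))
    (f'' := fun x ↦ a * exp x * b / (a * exp x + b) ^ 2)
    (fun x _ ↦ (hden x).log (hpos x).ne') (fun x _ ↦ ?_) (fun x _ ↦ by positivity)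
  exact (((hasDerivAt_exp x).const_mul a).div (hden x) (hpos x).ne').congr_deriv (by ring)

theorem convexOn_log_mul_exp_mul_add {a b : ℝ} (ha : 0 ≤ a) (hb : 0 ≤ b) (hab : 0 < a + b)
    (c : ℝ) : ConvexOn ℝ univ (fun x ↦ log (a * exp (x * c) + b)) :=
  (convexOn_log_mul_exp_add ha hb hab).comp_linearMap (LinearMap.mulRight ℝ c)

theorem convexOn_mul_log_sub_add_mul_log_add {c : ℝ} (hc : 0 ≤ c) :
    ConvexOn ℝ (Ioi 0) (fun x ↦ x * log x - (x + c) * log (x + c)) := by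
  refine convexOn_of_hasDerivAt2_nonneg (convex_Ioi 0) isOpen_Ioi
    (f' := fun x ↦ log x - log (x + c)) (f'' := fun x ↦ x⁻¹ - (x + c)⁻¹)
    (fun x hx ↦ ?_) (fun x hx ↦ ?_) (fun x hx ↦ ?_)
  all_goals have hx : 0 < x := hx
  · have hxc : x + c ≠ 0 := by positivity
    exact ((hasDerivAt_mul_log hx.ne').sub
      ((hasDerivAt_mul_log hxc).comp_add_const x c)).congr_deriv (by ring)
  · exact (hasDerivAt_log hx.ne').sub ((hasDerivAt_log (by positivity)).comp_add_const x c)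
  · have : (x + c)⁻¹ ≤ x⁻¹ := inv_anti₀ hx (by linarith)
    linarith

open Finset in
theorem stmt_12_general (n : ℕ) (θ q : Fin n → ℝ)
    (hq0 : ∀ i, 0 ≤ q i) (hq1 : ∀ i, q i ≤ 1) :
    ConvexOn ℝ (Set.Ioi 0)
      (fun ξ : ℝ => ξ * Real.log ξ - (ξ + 1) * Real.log (ξ + 1) +
        ∑ i, Real.log (q i * Real.exp (ξ * θ i) + (1 - q i))) := by
  refine (convexOn_mul_log_sub_add_mul_log_add zero_le_one).add
    (ConvexOn.finset_sum (convex_Ioi 0) _ fun i _ ↦ ?_)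
  exact (convexOn_log_mul_exp_mul_add (hq0 i) (sub_nonneg.2 (hq1 i)) (by simp) (θ i)).subset
    (subset_univ _) (convex_Ioi 0)

open Finset in
/-- The log variational upper bound `g(ξ) = −f*(ξ) + Σᵢ log(qᵢ·e^{ξθᵢ} + (1 − qᵢ))`
is convex on `(0, ∞)`. -/
theorem stmt_12 (n : ℕ) (hn : 1 ≤ n) (θ q : Fin n → ℝ)
    (hθ : ∀ i, 0 ≤ θ i) (hq0 : ∀ i, 0 ≤ q i) (hq1 : ∀ i, q i ≤ 1) :
    ConvexOn ℝ (Set.Ioi 0)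
      (fun ξ : ℝ => ξ * Real.log ξ - (ξ + 1) * Real.log (ξ + 1) +
        ∑ i, Real.log (q i * Real.exp (ξ * θ i) + (1 - q i))) :=
  stmt_12_general n θ q hq0 hq1
end

section
/- Let n ≥ 1, θ : Fin n → ℝ with θᵢ > 0 for all i, and q : Fin n → ℝ with 0 < qᵢ < 1. Then the function g(ξ) = ξ·log ξ − (ξ+1)·log(ξ+1) + Σ_{i} log(qᵢ·e^{ξ·θᵢ} + (1 − qᵢ)) attains a minimum on (0, ∞) at a unique point ξ^min > 0, characterized by the stationarity condition log(ξ^min/(1+ξ^min)) + Σ_{i} θᵢ/(pᵢ·e^{−ξ^min·θᵢ} + 1) = 0, where pᵢ = (1 − qᵢ)/qᵢ. -/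
/-!
The derivative of `g` on `(0, ∞)` is `log (ξ / (1 + ξ)) + ∑ θᵢ / (pᵢ e^{-ξθᵢ} + 1)`. Both parts are
increasing in `ξ`, the logarithm strictly, so `g` is convex and its derivative has at most one zero.
The derivative is below `log ξ + ∑ θᵢ`, hence negative near `0`, and tends to `∑ θᵢ > 0` at
infinity, so it does vanish; by convexity that zero is the global minimiser.
-/

open Finset Real Filter Set Topology

lemma hasDerivAt_mul_log_sub_add_one_mul_log {x : ℝ} (hx : 0 < x) :
    HasDerivAt (fun ξ => ξ * log ξ - (ξ + 1) * log (ξ + 1)) (log (x / (1 + x))) x := by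
  have hshift : HasDerivAt (fun ξ => (ξ + 1) * log (ξ + 1)) (log (x + 1) + 1) x := by
    simpa [Function.comp_def] using
      (hasDerivAt_mul_log (x := x + 1) (by positivity)).comp x ((hasDerivAt_id x).add_const 1)
  refine ((hasDerivAt_mul_log hx.ne').sub hshift).congr_deriv ?_
  rw [log_div hx.ne' (by positivity), add_comm 1 x]
  ring

lemma hasDerivAt_log_mul_exp_add_one_sub {q : ℝ} (hq0 : 0 < q) (hq1 : q ≤ 1) (θ x : ℝ) :
    HasDerivAt (fun ξ => log (q * exp (ξ * θ) + (1 - q)))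
      (θ / ((1 - q) / q * exp (-(x * θ)) + 1)) x := by
  have hpos : 0 < q * exp (x * θ) + (1 - q) := by
    have := mul_pos hq0 (exp_pos (x * θ)); linarith
  have hexp : HasDerivAt (fun ξ => exp (ξ * θ)) (exp (x * θ) * θ) x := by
    simpa using ((hasDerivAt_id x).mul_const θ).exp
  convert ((hexp.const_mul q).add_const (1 - q)).log hpos.ne' using 1
  rw [exp_neg]
  field_simp
  ring

lemma monotone_div_mul_exp_neg_add_one {θ p : ℝ} (hθ : 0 ≤ θ) (hp : 0 ≤ p) :
    Monotone fun ξ => θ / (p * exp (-(ξ * θ)) + 1) := by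
  intro a b hab
  have hexp : exp (-(b * θ)) ≤ exp (-(a * θ)) :=
    exp_le_exp.2 (neg_le_neg (mul_le_mul_of_nonneg_right hab hθ))
  exact div_le_div_of_nonneg_left hθ (by positivity) (by gcongr)

lemma div_mul_exp_neg_add_one_le {θ p : ℝ} (hθ : 0 ≤ θ) (hp : 0 ≤ p) (ξ : ℝ) :
    θ / (p * exp (-(ξ * θ)) + 1) ≤ θ :=
  div_le_self hθ (le_add_of_nonneg_left (by positivity))

lemma tendsto_div_mul_exp_neg_add_one {θ : ℝ} (hθ : 0 < θ) (p : ℝ) :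
    Tendsto (fun ξ => θ / (p * exp (-(ξ * θ)) + 1)) atTop (𝓝 θ) := by
  have hexp : Tendsto (fun ξ => exp (-(ξ * θ))) atTop (𝓝 0) :=
    tendsto_exp_atBot.comp (tendsto_neg_atTop_atBot.comp (tendsto_id.atTop_mul_const hθ))
  simpa [Pi.div_def] using tendsto_const_nhds.div ((hexp.const_mul p).add_const 1) (by simp)

lemma strictMonoOn_log_div_one_add : StrictMonoOn (fun x => log (x / (1 + x))) (Ioi 0) := by
  intro a (ha : 0 < a) b (hb : 0 < b) hab
  refine log_lt_log (by positivity) ?_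
  rw [div_lt_div_iff₀ (by positivity) (by positivity)]
  linarith

lemma tendsto_log_div_one_add_atTop : Tendsto (fun x => log (x / (1 + x))) atTop (𝓝 0) := by
  have hinv : Tendsto (fun x : ℝ => (1 + x⁻¹)⁻¹) atTop (𝓝 1) := by
    simpa using ((tendsto_inv_atTop_zero (𝕜 := ℝ)).const_add 1).inv₀ (by norm_num)
  have hfrac : Tendsto (fun x : ℝ => x / (1 + x)) atTop (𝓝 1) := by
    refine hinv.congr' ?_
    filter_upwards [eventually_gt_atTop 0] with x hx
    field_simp
    ring
  simpa [Function.comp_def] using (continuousAt_log one_ne_zero).tendsto.comp hfrac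

lemma isMinOn_of_hasDerivAt_of_monotoneOn {f f' : ℝ → ℝ} {D : Set ℝ} {x₀ : ℝ}
    (hDo : IsOpen D) (hDc : Convex ℝ D) (hf : ∀ x ∈ D, HasDerivAt f (f' x) x)
    (hf' : MonotoneOn f' D) (hx₀ : x₀ ∈ D) (h₀ : f' x₀ = 0) : IsMinOn f D x₀ := by
  have hconv : ConvexOn ℝ D f := by
    refine MonotoneOn.convexOn_of_deriv hDc
      (fun x hx => (hf x hx).continuousAt.continuousWithinAt) ?_ ?_ <;> rw [hDo.interior_eq]
    · exact fun x hx => (hf x hx).differentiableAt.differentiableWithinAt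
    · exact hf'.congr fun x hx => (hf x hx).deriv.symm
  refine hconv.isMinOn_of_rightDeriv_eq_zero (by rwa [hDo.interior_eq]) ?_
  rw [(hf x₀ hx₀).hasDerivWithinAt.derivWithin (uniqueDiffWithinAt_Ioi x₀), h₀]

section VariationalBound

variable {ι : Type*} [Fintype ι] (θ q : ι → ℝ)

/-- The paper's `g`. -/
noncomputable def logVarBound (ξ : ℝ) : ℝ :=
  ξ * log ξ - (ξ + 1) * log (ξ + 1) + ∑ i, log (q i * exp (ξ * θ i) + (1 - q i))

/-- The paper's `g`. -/
noncomputable def logVarBoundDeriv (ξ : ℝ) : ℝ :=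
  log (ξ / (1 + ξ)) + ∑ i, θ i / ((1 - q i) / q i * exp (-(ξ * θ i)) + 1)

variable {θ q}

lemma hasDerivAt_logVarBound (hq0 : ∀ i, 0 < q i) (hq1 : ∀ i, q i ≤ 1) {ξ : ℝ} (hξ : 0 < ξ) :
    HasDerivAt (logVarBound θ q) (logVarBoundDeriv θ q ξ) ξ :=
  (hasDerivAt_mul_log_sub_add_one_mul_log hξ).add <|
    HasDerivAt.fun_sum fun i _ => hasDerivAt_log_mul_exp_add_one_sub (hq0 i) (hq1 i) (θ i) ξ

lemma strictMonoOn_logVarBoundDeriv (hθ : ∀ i, 0 ≤ θ i) (hq0 : ∀ i, 0 < q i)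
    (hq1 : ∀ i, q i ≤ 1) : StrictMonoOn (logVarBoundDeriv θ q) (Ioi 0) := by
  intro a ha b hb hab
  have hp : ∀ i, 0 ≤ (1 - q i) / q i := fun i => div_nonneg (sub_nonneg.2 (hq1 i)) (hq0 i).le
  exact add_lt_add_of_lt_of_le (strictMonoOn_log_div_one_add ha hb hab) <|
    sum_le_sum fun i _ => monotone_div_mul_exp_neg_add_one (hθ i) (hp i) hab.le

lemma logVarBoundDeriv_lt_log_add_sum (hθ : ∀ i, 0 ≤ θ i) (hq0 : ∀ i, 0 < q i)
    (hq1 : ∀ i, q i ≤ 1) {ξ : ℝ} (hξ : 0 < ξ) : logVarBoundDeriv θ q ξ < log ξ + ∑ i, θ i := by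
  have hp : ∀ i, 0 ≤ (1 - q i) / q i := fun i => div_nonneg (sub_nonneg.2 (hq1 i)) (hq0 i).le
  refine add_lt_add_of_lt_of_le ?_ <|
    sum_le_sum fun i _ => div_mul_exp_neg_add_one_le (hθ i) (hp i) ξ
  exact log_lt_log (by positivity) (div_lt_self hξ (by linarith))

lemma tendsto_logVarBoundDeriv_atTop (hθ : ∀ i, 0 < θ i) :
    Tendsto (logVarBoundDeriv θ q) atTop (𝓝 (∑ i, θ i)) := by
  have := tendsto_log_div_one_add_atTop.add <|
    tendsto_finsetSum univ fun i _ => tendsto_div_mul_exp_neg_add_one (hθ i) ((1 - q i) / q i)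
  rwa [zero_add] at this

lemma continuousOn_logVarBoundDeriv (hq0 : ∀ i, 0 < q i) (hq1 : ∀ i, q i ≤ 1) :
    ContinuousOn (logVarBoundDeriv θ q) (Ioi 0) := by
  have hp : ∀ i, 0 ≤ (1 - q i) / q i := fun i => div_nonneg (sub_nonneg.2 (hq1 i)) (hq0 i).le
  unfold logVarBoundDeriv
  fun_prop (disch := first
    | intro x (hx : (0 : ℝ) < x); positivity
    | exact fun x _ => (add_pos_of_nonneg_of_pos (mul_nonneg (hp _) (exp_pos _).le) one_pos).ne')

lemma exists_pos_logVarBoundDeriv_eq_zero [Nonempty ι] (hθ : ∀ i, 0 < θ i)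
    (hq0 : ∀ i, 0 < q i) (hq1 : ∀ i, q i ≤ 1) : ∃ ξ, 0 < ξ ∧ logVarBoundDeriv θ q ξ = 0 := by
  set a := exp (-∑ i, θ i)
  have ha : 0 < a := exp_pos _
  have hneg : logVarBoundDeriv θ q a < 0 := by
    have := logVarBoundDeriv_lt_log_add_sum (fun i => (hθ i).le) hq0 hq1 ha
    rwa [log_exp, neg_add_cancel] at this
  obtain ⟨b, hpos, hab⟩ : ∃ b, 0 < logVarBoundDeriv θ q b ∧ a < b :=
    (((tendsto_logVarBoundDeriv_atTop hθ).eventually <| eventually_gt_nhds <|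
      sum_pos (fun i _ => hθ i) univ_nonempty).and (eventually_gt_atTop a)).exists
  obtain ⟨ξ, hξ, hzero⟩ := intermediate_value_Icc hab.le
    ((continuousOn_logVarBoundDeriv hq0 hq1).mono fun x hx => ha.trans_le hx.1) ⟨hneg.le, hpos.le⟩
  exact ⟨ξ, ha.trans_le hξ.1, hzero⟩

end VariationalBound

open Finset in
/-- The log variational bound `g` attains a minimum on `(0, ∞)` at a unique point
`ξ^min`, characterized by the stationarity condition
`log(ξ^min/(1+ξ^min)) + Σᵢ θᵢ/(pᵢ·e^{−ξ^min·θᵢ} + 1) = 0` with `pᵢ = (1 − qᵢ)/qᵢ`. -/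
theorem stmt_14 (n : ℕ) (hn : 1 ≤ n) (θ q : Fin n → ℝ)
    (hθ : ∀ i, 0 < θ i) (hq0 : ∀ i, 0 < q i) (hq1 : ∀ i, q i < 1) :
    ∃! ξm : ℝ, 0 < ξm ∧
      (∀ ξ : ℝ, 0 < ξ →
        ξm * Real.log ξm - (ξm + 1) * Real.log (ξm + 1) +
            ∑ i, Real.log (q i * Real.exp (ξm * θ i) + (1 - q i)) ≤
          ξ * Real.log ξ - (ξ + 1) * Real.log (ξ + 1) +
            ∑ i, Real.log (q i * Real.exp (ξ * θ i) + (1 - q i))) ∧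
      Real.log (ξm / (1 + ξm)) +
          ∑ i, θ i / ((1 - q i) / q i * Real.exp (-(ξm * θ i)) + 1) = 0 := by
  have : Nonempty (Fin n) := ⟨⟨0, hn⟩⟩
  have hq1' : ∀ i, q i ≤ 1 := fun i => (hq1 i).le
  have hmono := strictMonoOn_logVarBoundDeriv (fun i => (hθ i).le) hq0 hq1'
  obtain ⟨ξm, hpos, hzero⟩ := exists_pos_logVarBoundDeriv_eq_zero hθ hq0 hq1'
  have hmin : IsMinOn (logVarBound θ q) (Ioi 0) ξm :=
    isMinOn_of_hasDerivAt_of_monotoneOn isOpen_Ioi (convex_Ioi 0)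
      (fun _ hx => hasDerivAt_logVarBound hq0 hq1' hx) hmono.monotoneOn hpos hzero
  refine ⟨ξm, ⟨hpos, fun ξ hξ => hmin hξ, hzero⟩, ?_⟩
  rintro ξ ⟨hξ, -, hstat⟩
  exact hmono.injOn hξ hpos (hstat.trans hzero.symm)
end
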